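/- Let n and k be positive natural numbers and let F be a symmetric relation on Fin n × Fin k. If there exists a family of permutations σ : Fin n → Equiv.Perm (Fin k) such that for every q : Fin k and all i ≠ j in Fin n one has F (i, σ i q) (j, σ j q), then for all i ≠ j in Fin n and every subset S of Fin k, the set { q : Fin k | ∃ p ∈ S, F (i, p) (j, q) } has cardinality at least |S|. -/
import Mathlib

/-- **Necessity direction of the Friendship Theorem.** If friendship sets exist
(a family of permutations whose transversals consist of pairwise friends), then for all
`i ≠ j` and every subset `S` of `Fin k`, the set of persons of the `j`-th set who are
friends with some person of `S` in the `i`-th set has cardinality at least `|S|`. -/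
theorem friendship_necessity (n k : ℕ) (hn : 0 < n) (hk : 0 < k)
    (F : Fin n × Fin k → Fin n × Fin k → Prop) (hsymm : Symmetric F)
    (h : ∃ σ : Fin n → Equiv.Perm (Fin k),
        ∀ q : Fin k, ∀ i j : Fin n, i ≠ j → F (i, σ i q) (j, σ j q)) :
    ∀ i j : Fin n, i ≠ j → ∀ S : Finset (Fin k),
      S.card ≤ {q : Fin k | ∃ p ∈ S, F (i, p) (j, q)}.ncard := by
  intro i j hij S
  obtain ⟨σ, hσ⟩ := h
  set f : Fin k → Fin k := fun p => σ j ((σ i).symm p) with hf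
  have hinj : Function.Injective f := fun a b hab => by
    simpa using (σ i).symm.injective ((σ j).injective hab)
  have hsub : f '' (S : Set (Fin k)) ⊆ {q : Fin k | ∃ p ∈ S, F (i, p) (j, q)} := by
    rintro q ⟨p, hp, rfl⟩
    exact ⟨p, hp, by simpa using hσ ((σ i).symm p) i j hij⟩
  calc S.card = (f '' (S : Set (Fin k))).ncard := by
        rw [Set.ncard_image_of_injective _ hinj, Set.ncard_coe_finset]
    _ ≤ _ := Set.ncard_le_ncard hsub (Set.toFinite _)
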